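/- Let 𝒲 = ⊥𝒢ℐ be the left Ext-orthogonal of the class of Gorenstein injective right R-modules, and suppose (𝒲, 𝒲⊥) is a complete hereditary cotorsion pair whose kernel 𝒲 ∩ 𝒲⊥ is the class of injective modules. Then 𝒲⊥ ⊆ 𝒢ℐ, i.e., every module G with Ext¹_R(W, G) = 0 for all W ∈ 𝒲 is Gorenstein injective. -/

import Mathlib

open LinearMap

/-- `Ext¹_R(A,B) = 0`: every short exact sequence `0 → B → E → A → 0` of `R`-modules
splits. -/
def Ext1Zero (R : Type) [Ring R] (A B : Type) [AddCommGroup A] [Module R A]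
    [AddCommGroup B] [Module R B] : Prop :=
  ∀ (E : Type) [AddCommGroup E] [Module R E] (i : B →ₗ[R] E) (p : E →ₗ[R] A),
    Function.Injective i → Function.Surjective p → LinearMap.range i = LinearMap.ker p →
    ∃ s : A →ₗ[R] E, p ∘ₗ s = LinearMap.id

/-- `G` is a Gorenstein injective `R`-module: a cocycle in a totally acyclic complex of
injective modules, i.e. an acyclic complex of injectives which stays exact after applying
`Hom_R(Q, −)` for every injective module `Q`. -/
def IsGorensteinInjective (R : Type) [Ring R] (G : Type) [AddCommGroup G] [Module R G] :
    Prop :=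
  ∃ (E : ℤ → ModuleCat.{0} R) (d : ∀ n : ℤ, ↥(E n) →ₗ[R] ↥(E (n + 1))),
    (∀ n, Module.Injective R ↥(E n)) ∧
    (∀ n, LinearMap.range (d n) = LinearMap.ker (d (n + 1))) ∧
    (∀ (Q : Type) [AddCommGroup Q] [Module R Q], Module.Injective R Q →
      ∀ (n : ℤ) (h : Q →ₗ[R] ↥(E (n + 1))), (d (n + 1)) ∘ₗ h = 0 →
        ∃ k : Q →ₗ[R] ↥(E n), (d n) ∘ₗ k = h) ∧
    Nonempty (G ≃ₗ[R] LinearMap.ker (d 0))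

/-- Membership of the class `𝒲 = ⊥𝒢ℐ`. -/
def MemPerpGI (R : Type) [Ring R] (W : Type) [AddCommGroup W] [Module R W] : Prop :=
  ∀ (G : Type) [AddCommGroup G] [Module R G], IsGorensteinInjective R G → Ext1Zero R W G

/-- Membership of the class `𝒲⊥ = (⊥𝒢ℐ)⊥`. -/
def MemPerpGIPerp (R : Type) [Ring R] (B : Type) [AddCommGroup B] [Module R B] : Prop :=
  ∀ (W : Type) [AddCommGroup W] [Module R W], MemPerpGI R W → Ext1Zero R W B

/-!
Write `Ext¹(W, M) = 0` as: every map `ker π → M` extends along a projective presentation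
`π : F ↠ W`. With this criterion `𝒲⊥` is closed under extensions, and, because `𝒲` is closed under
kernels of epimorphisms, also under cokernels of monomorphisms. For `G ∈ 𝒲⊥`, a special
`𝒲`-precover `0 → B → A → G → 0` therefore has `A ∈ 𝒲 ∩ 𝒲⊥`, i.e. `A` injective, and
`B ∈ 𝒲⊥`; an embedding of `G` into an injective module has its cokernel in `𝒲⊥`. Iterating
both steps and splicing gives an acyclic complex of injectives with all cycles in `𝒲⊥`, which
stays exact under `Hom(Q, −)` for injective `Q` since `Q ∈ 𝒲` and `Ext¹(𝒲, 𝒲⊥) = 0`.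
-/

section

variable {R : Type} [Ring R] {A B C F G M N Q W X Y : Type}
  [AddCommGroup A] [Module R A] [AddCommGroup B] [Module R B] [AddCommGroup C] [Module R C]
  [AddCommGroup F] [Module R F] [AddCommGroup G] [Module R G] [AddCommGroup M] [Module R M]
  [AddCommGroup N] [Module R N] [AddCommGroup Q] [Module R Q] [AddCommGroup W] [Module R W]
  [AddCommGroup X] [Module R X] [AddCommGroup Y] [Module R Y]

theorem LinearMap.exists_comp_eq_of_range_le {i : B →ₗ[R] X} {g : Y →ₗ[R] X}
    (h : range g ≤ range i) (hi : Function.Injective i) : ∃ g' : Y →ₗ[R] B, i ∘ₗ g' = g :=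
  ⟨(LinearEquiv.ofInjective i hi).symm ∘ₗ g.codRestrict _ fun y => h (mem_range_self g y),
    by ext y; simp [LinearEquiv.ofInjective_symm_apply]⟩

theorem LinearMap.exists_comp_eq_of_ker_le {π : F →ₗ[R] W} (hπ : Function.Surjective π)
    {g : F →ₗ[R] N} (h : ker π ≤ ker g) : ∃ g' : W →ₗ[R] N, g' ∘ₗ π = g :=
  ⟨(ker π).liftQ g h ∘ₗ (π.quotKerEquivOfSurjective hπ).symm, by
    ext x
    simp [LinearMap.quotKerEquivOfSurjective_symm_apply]⟩

theorem exists_projective_surjective (W : Type) [AddCommGroup W] [Module R W] :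
    ∃ (F : Type) (_ : AddCommGroup F) (_ : Module R F) (_ : Module.Projective R F)
      (π : F →ₗ[R] W), Function.Surjective π :=
  ⟨W →₀ R, _, _, inferInstance, _, Finsupp.linearCombination_id_surjective R W⟩

theorem ext1Zero_of_injective [Module.Injective R B] : Ext1Zero R W B := by
  intro X _ _ i p hi hp hex
  obtain ⟨r, hr⟩ := Module.Injective.extension_property R B B X i hi LinearMap.id
  exact (((LinearMap.exact_iff.2 hex.symm).split_tfae hi hp).out 0 1).2
    (show ∃ l, l ∘ₗ i = LinearMap.id from ⟨r, hr⟩)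

theorem ext1Zero_of_projective [Module.Projective R F] : Ext1Zero R F B :=
  fun _ _ _ _ p _ hp _ => Module.projective_lifting_property p LinearMap.id hp

/-- The pushout of `0 → ker π → F → W → 0` along `f` splits, and a retraction of it extends `f`. -/
theorem Ext1Zero.exists_extend (h : Ext1Zero R W M) {π : F →ₗ[R] W}
    (hπ : Function.Surjective π) (f : ker π →ₗ[R] M) :
    ∃ φ : F →ₗ[R] M, φ ∘ₗ (ker π).subtype = f := by
  let S : Submodule R (M × F) := range (f.prod (-(ker π).subtype))
  let i : M →ₗ[R] (M × F) ⧸ S := S.mkQ ∘ₗ inl R M F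
  let p : (M × F) ⧸ S →ₗ[R] W := S.liftQ (π ∘ₗ snd R M F) <| by
    rintro _ ⟨k, rfl⟩
    simp
  have glue : ∀ k : ker π, i (f k) = S.mkQ (0, k) := by
    intro k
    simp only [i, LinearMap.comp_apply, Submodule.mkQ_apply, Submodule.Quotient.eq]
    exact ⟨k, by simp⟩
  have hi : Function.Injective i := by
    rw [injective_iff_map_eq_zero]
    intro m hm
    obtain ⟨k, hk⟩ := (Submodule.Quotient.mk_eq_zero S).1 hm
    obtain rfl : k = 0 := Subtype.ext (by simpa using congrArg Prod.snd hk)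
    simpa using (congrArg Prod.fst hk).symm
  have hp : Function.Surjective p := fun w =>
    (hπ w).elim fun x hx => ⟨S.mkQ (0, x), by simpa [p] using hx⟩
  have hex : range i = ker p := by
    refine le_antisymm (range_le_ker_iff.2 (by ext; simp [i, p])) fun ξ hξ => ?_
    obtain ⟨⟨m, x⟩, rfl⟩ := Submodule.mkQ_surjective S ξ
    have hx : x ∈ ker π := by simpa [p] using hξ
    refine ⟨m + f ⟨x, hx⟩, ?_⟩
    simp only [i, LinearMap.comp_apply, Submodule.mkQ_apply, Submodule.Quotient.eq]
    exact ⟨⟨x, hx⟩, by simp⟩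
  obtain ⟨r, hr⟩ := (((LinearMap.exact_iff.2 hex.symm).split_tfae hi hp).out 0 1).1
    (h _ i p hi hp hex)
  refine ⟨r ∘ₗ S.mkQ ∘ₗ inr R M F, LinearMap.ext fun k => ?_⟩
  simpa [← glue] using LinearMap.congr_fun hr (f k)

/-- Lift `f ∘ π` to `A`; on `ker π` it lands in `B`, so after subtracting an extension of that
part to `F` it descends along `π`. -/
theorem exists_lift_of_forall_extend [Module.Projective R F] {π : F →ₗ[R] W}
    (hπ : Function.Surjective π)
    (hext : ∀ f : ker π →ₗ[R] B, ∃ φ : F →ₗ[R] B, φ ∘ₗ (ker π).subtype = f)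
    {i : B →ₗ[R] A} {p : A →ₗ[R] C} (hi : Function.Injective i) (hp : Function.Surjective p)
    (hex : range i = ker p) (f : W →ₗ[R] C) : ∃ k : W →ₗ[R] A, p ∘ₗ k = f := by
  obtain ⟨g, hg⟩ := Module.projective_lifting_property p (f ∘ₗ π) hp
  have hrange : range (g ∘ₗ (ker π).subtype) ≤ range i := by
    rw [hex, range_le_ker_iff, ← LinearMap.comp_assoc, hg, LinearMap.comp_assoc,
      comp_ker_subtype, comp_zero]
  obtain ⟨g₀, hg₀⟩ := exists_comp_eq_of_range_le hrange hi
  obtain ⟨φ, rfl⟩ := hext g₀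
  obtain ⟨k, hk⟩ := exists_comp_eq_of_ker_le hπ (g := g - i ∘ₗ φ) fun x hx => by
    simpa [sub_eq_zero] using (LinearMap.congr_fun hg₀ ⟨x, hx⟩).symm
  refine ⟨k, (cancel_right hπ).1 ?_⟩
  rw [LinearMap.comp_assoc, hk, comp_sub, hg, ← LinearMap.comp_assoc,
    range_le_ker_iff.1 hex.le, zero_comp, sub_zero]

theorem ext1Zero_of_forall_extend [Module.Projective R F] {π : F →ₗ[R] W}
    (hπ : Function.Surjective π)
    (h : ∀ f : ker π →ₗ[R] M, ∃ φ : F →ₗ[R] M, φ ∘ₗ (ker π).subtype = f) :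
    Ext1Zero R W M :=
  fun _ _ _ _ _ hi hp hex => exists_lift_of_forall_extend hπ h hi hp hex LinearMap.id

theorem Ext1Zero.exists_lift (h : Ext1Zero R Q B) {i : B →ₗ[R] A} {p : A →ₗ[R] C}
    (hi : Function.Injective i) (hp : Function.Surjective p) (hex : range i = ker p)
    (f : Q →ₗ[R] C) : ∃ k : Q →ₗ[R] A, p ∘ₗ k = f :=
  have ⟨_, _, _, _, _, hπ⟩ := exists_projective_surjective (R := R) Q
  exists_lift_of_forall_extend hπ (h.exists_extend hπ) hi hp hex f

theorem Ext1Zero.of_extension (hB : Ext1Zero R W B) (hG : Ext1Zero R W G)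
    {i : B →ₗ[R] A} {p : A →ₗ[R] G} (hi : Function.Injective i) (hp : Function.Surjective p)
    (hex : range i = ker p) : Ext1Zero R W A := by
  obtain ⟨F, _, _, _, π, hπ⟩ := exists_projective_surjective (R := R) W
  refine ext1Zero_of_forall_extend hπ fun f => ?_
  obtain ⟨φG, hφG⟩ := hG.exists_extend hπ (p ∘ₗ f)
  obtain ⟨φA, hφA⟩ := Module.projective_lifting_property p φG hp
  have hrange : range (f - φA ∘ₗ (ker π).subtype) ≤ range i := by
    rw [hex, range_le_ker_iff, comp_sub, ← LinearMap.comp_assoc, hφA, hφG, sub_self]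
  obtain ⟨fB, hfB⟩ := exists_comp_eq_of_range_le hrange hi
  obtain ⟨φB, rfl⟩ := hB.exists_extend hπ fB
  exact ⟨φA + i ∘ₗ φB, by rw [add_comp, LinearMap.comp_assoc, hfB, add_sub_cancel]⟩

theorem memPerpGI_of_projective [Module.Projective R F] : MemPerpGI R F :=
  fun _ _ _ _ => ext1Zero_of_projective

theorem memPerpGIPerp_of_injective [Module.Injective R B] : MemPerpGIPerp R B :=
  fun _ _ _ _ => ext1Zero_of_injective

theorem MemPerpGIPerp.cokernel
    (hher : ∀ (A B : Type) [AddCommGroup A] [Module R A] [AddCommGroup B] [Module R B]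
      (f : A →ₗ[R] B), Function.Surjective f → MemPerpGI R A → MemPerpGI R B →
      MemPerpGI R ↥(LinearMap.ker f))
    (hB : MemPerpGIPerp R B) (hA : MemPerpGIPerp R A) {i : B →ₗ[R] A} {p : A →ₗ[R] C}
    (hi : Function.Injective i) (hp : Function.Surjective p) (hex : range i = ker p) :
    MemPerpGIPerp R C := by
  intro W _ _ hW
  obtain ⟨F, _, _, _, π, hπ⟩ := exists_projective_surjective (R := R) W
  have hK := hher _ _ _ hπ memPerpGI_of_projective hW
  refine ext1Zero_of_forall_extend hπ fun f => ?_
  obtain ⟨ψ, rfl⟩ := (hB _ hK).exists_lift hi hp hex f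
  obtain ⟨φ, rfl⟩ := (hA W hW).exists_extend hπ ψ
  exact ⟨p ∘ₗ φ, LinearMap.comp_assoc _ _ _⟩

structure InjectiveShortExact (A C : ModuleCat.{0} R) where
  E : ModuleCat.{0} R
  injective : Module.Injective R E
  i : A →ₗ[R] E
  p : E →ₗ[R] C
  i_injective : Function.Injective i
  p_surjective : Function.Surjective p
  exact : range i = ker p

theorem isGorensteinInjective_of_injectiveShortExact (Z : ℤ → ModuleCat.{0} R)
    (s : ∀ n, InjectiveShortExact (Z n) (Z (n + 1)))
    (hZ : ∀ n (Q : Type) [AddCommGroup Q] [Module R Q],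
      Module.Injective R Q → Ext1Zero R Q (Z n))
    {G : Type} [AddCommGroup G] [Module R G] (e : G ≃ₗ[R] Z 0) : IsGorensteinInjective R G := by
  have ker_d : ∀ n, ker ((s (n + 1)).i ∘ₗ (s n).p) = ker (s n).p := fun n =>
    ker_comp_of_ker_eq_bot _ (ker_eq_bot.2 (s (n + 1)).i_injective)
  refine ⟨fun n => (s n).E, fun n => (s (n + 1)).i ∘ₗ (s n).p, fun n => (s n).injective,
    fun n => ?_, fun Q _ _ hQ n h hh => ?_, ⟨e.trans ((LinearEquiv.ofInjective _
      (s 0).i_injective).trans (.ofEq _ _ ((s 0).exact.trans (ker_d 0).symm)))⟩⟩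
  · rw [range_comp_of_range_eq_top _ (range_eq_top.2 (s n).p_surjective), ker_d]
    exact (s (n + 1)).exact
  · have hrange : range h ≤ range (s (n + 1)).i :=
      (range_le_ker_iff.2 hh).trans ((ker_d (n + 1)).trans (s (n + 1)).exact.symm).le
    obtain ⟨h', rfl⟩ := exists_comp_eq_of_range_le hrange (s (n + 1)).i_injective
    obtain ⟨k, hk⟩ :=
      (hZ n Q hQ).exists_lift (s n).i_injective (s n).p_surjective (s n).exact h'
    exact ⟨k, by rw [LinearMap.comp_assoc, hk]⟩

theorem MemPerpGIPerp.nonempty_injectiveShortExact_left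
    (hprec : ∀ (M : Type) [AddCommGroup M] [Module R M],
      ∃ (A B : ModuleCat.{0} R) (i : ↥B →ₗ[R] ↥A) (p : ↥A →ₗ[R] M),
        MemPerpGI R ↥A ∧ MemPerpGIPerp R ↥B ∧
        Function.Injective i ∧ Function.Surjective p ∧
        LinearMap.range i = LinearMap.ker p)
    (hinj : ∀ (M : Type) [AddCommGroup M] [Module R M],
      MemPerpGI R M → MemPerpGIPerp R M → Module.Injective R M)
    {Z : ModuleCat.{0} R} (hZ : MemPerpGIPerp R Z) :
    Nonempty (Σ B : {B : ModuleCat.{0} R // MemPerpGIPerp R B}, InjectiveShortExact B.1 Z) := by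
  obtain ⟨A, B, i, p, hA, hB, hi, hp, hex⟩ := hprec Z
  have hA' : MemPerpGIPerp R A := fun W _ _ hW => (hB W hW).of_extension (hZ W hW) hi hp hex
  exact ⟨⟨⟨B, hB⟩, ⟨A, hinj A hA hA', i, p, hi, hp, hex⟩⟩⟩

theorem exists_injective_embedding (Z : ModuleCat.{0} R) :
    ∃ (J : ModuleCat.{0} R) (f : Z →ₗ[R] J), Module.Injective R J ∧ Function.Injective f := by
  open CategoryTheory in
  let J : ModuleCat.{0} R := Injective.under Z
  have : Injective (ModuleCat.of R J) := Injective.injective_under Z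
  exact ⟨J, (Injective.ι Z).hom, Module.injective_module_of_injective_object R J,
    (ModuleCat.mono_iff_injective _).1 inferInstance⟩

theorem MemPerpGIPerp.nonempty_injectiveShortExact_right
    (hher : ∀ (A B : Type) [AddCommGroup A] [Module R A] [AddCommGroup B] [Module R B]
      (f : A →ₗ[R] B), Function.Surjective f → MemPerpGI R A → MemPerpGI R B →
      MemPerpGI R ↥(LinearMap.ker f))
    {Z : ModuleCat.{0} R} (hZ : MemPerpGIPerp R Z) :
    Nonempty (Σ C : {C : ModuleCat.{0} R // MemPerpGIPerp R C}, InjectiveShortExact Z C.1) := by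
  obtain ⟨J, f, hJ, hf⟩ := exists_injective_embedding Z
  have hC := hZ.cokernel hher memPerpGIPerp_of_injective hf (range f).mkQ_surjective
    (Submodule.ker_mkQ _).symm
  exact ⟨⟨⟨.of R (J ⧸ range f), hC⟩,
    ⟨J, hJ, f, (range f).mkQ, hf, (range f).mkQ_surjective, (Submodule.ker_mkQ _).symm⟩⟩⟩

section Splicing

variable {P : ModuleCat.{0} R → Prop}
  (left : ∀ Z : {Z // P Z}, Σ B : {B // P B}, InjectiveShortExact B.1 Z.1)
  (right : ∀ Z : {Z // P Z}, Σ C : {C // P C}, InjectiveShortExact Z.1 C.1)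

def leftChain (G : {Z // P Z}) : ℕ → {Z // P Z}
  | 0 => G
  | k + 1 => (left (leftChain G k)).1

def rightChain (G : {Z // P Z}) : ℕ → {Z // P Z}
  | 0 => G
  | k + 1 => (right (rightChain G k)).1

def splicedCycle (G : {Z // P Z}) : ℤ → {Z // P Z}
  | .ofNat k => rightChain right G k
  | .negSucc k => leftChain left G (k + 1)

def splicedStep (G : {Z // P Z}) :
    ∀ n, InjectiveShortExact (splicedCycle left right G n).1 (splicedCycle left right G (n + 1)).1
  | .ofNat k => (right (rightChain right G k)).2
  | .negSucc 0 => (left G).2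
  | .negSucc (k + 1) => (left (leftChain left G (k + 1))).2

end Splicing

end

theorem memPerpGIPerp_gorensteinInjective_general {R : Type} [Ring R]
    -- completeness: special 𝒲-precovers ...
    (hprec : ∀ (M : Type) [AddCommGroup M] [Module R M],
      ∃ (A B : ModuleCat.{0} R) (i : ↥B →ₗ[R] ↥A) (p : ↥A →ₗ[R] M),
        MemPerpGI R ↥A ∧ MemPerpGIPerp R ↥B ∧
        Function.Injective i ∧ Function.Surjective p ∧
        LinearMap.range i = LinearMap.ker p)
    -- hereditary: 𝒲 is closed under kernels of epimorphisms
    (hher : ∀ (A B : Type) [AddCommGroup A] [Module R A] [AddCommGroup B] [Module R B]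
      (f : A →ₗ[R] B), Function.Surjective f → MemPerpGI R A → MemPerpGI R B →
      MemPerpGI R ↥(LinearMap.ker f))
    -- the kernel of the cotorsion pair is the class of injective modules
    (hkernel : ∀ (M : Type) [AddCommGroup M] [Module R M],
      (MemPerpGI R M ∧ MemPerpGIPerp R M) ↔ Module.Injective R M) :
    ∀ (G : Type) [AddCommGroup G] [Module R G],
      MemPerpGIPerp R G → IsGorensteinInjective R G := by
  intro G _ _ hG
  let left := fun Z : {Z : ModuleCat.{0} R // MemPerpGIPerp R Z} =>
    (Z.2.nonempty_injectiveShortExact_left hprec fun M _ _ hM hM' =>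
      (hkernel M).1 ⟨hM, hM'⟩).some
  let right := fun Z : {Z : ModuleCat.{0} R // MemPerpGIPerp R Z} =>
    (Z.2.nonempty_injectiveShortExact_right hher).some
  let G' : {Z : ModuleCat.{0} R // MemPerpGIPerp R Z} := ⟨.of R G, hG⟩
  exact isGorensteinInjective_of_injectiveShortExact _ (splicedStep left right G')
    (fun n Q _ _ hQ => (splicedCycle left right G' n).2 Q ((hkernel Q).2 hQ).1) (.refl R G)

/-- Let `𝒲 = ⊥𝒢ℐ`. If `(𝒲, 𝒲⊥)` is a complete hereditary cotorsion
pair (hereditarity being expressed by the equivalent property that `𝒲` is closed under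
kernels of epimorphisms between its members) whose kernel `𝒲 ∩ 𝒲⊥` is the class of
injective modules, then `𝒲⊥ ⊆ 𝒢ℐ`. -/
theorem memPerpGIPerp_gorensteinInjective {R : Type} [Ring R]
    -- completeness: special 𝒲-precovers ...
    (hprec : ∀ (M : Type) [AddCommGroup M] [Module R M],
      ∃ (A B : ModuleCat.{0} R) (i : ↥B →ₗ[R] ↥A) (p : ↥A →ₗ[R] M),
        MemPerpGI R ↥A ∧ MemPerpGIPerp R ↥B ∧
        Function.Injective i ∧ Function.Surjective p ∧
        LinearMap.range i = LinearMap.ker p)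
    -- ... and special 𝒲⊥-preenvelopes
    (hpree : ∀ (M : Type) [AddCommGroup M] [Module R M],
      ∃ (B A : ModuleCat.{0} R) (i : M →ₗ[R] ↥B) (p : ↥B →ₗ[R] ↥A),
        MemPerpGIPerp R ↥B ∧ MemPerpGI R ↥A ∧
        Function.Injective i ∧ Function.Surjective p ∧
        LinearMap.range i = LinearMap.ker p)
    -- hereditary: 𝒲 is closed under kernels of epimorphisms
    (hher : ∀ (A B : Type) [AddCommGroup A] [Module R A] [AddCommGroup B] [Module R B]
      (f : A →ₗ[R] B), Function.Surjective f → MemPerpGI R A → MemPerpGI R B →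
      MemPerpGI R ↥(LinearMap.ker f))
    -- the kernel of the cotorsion pair is the class of injective modules
    (hkernel : ∀ (M : Type) [AddCommGroup M] [Module R M],
      (MemPerpGI R M ∧ MemPerpGIPerp R M) ↔ Module.Injective R M) :
    ∀ (G : Type) [AddCommGroup G] [Module R G],
      MemPerpGIPerp R G → IsGorensteinInjective R G :=
  memPerpGIPerp_gorensteinInjective_general hprec hher hkernel
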